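/- In the setting of a finite poset S (the stratification poset) with S ≅ (• ← • → •)^T for a finite set T, a functor F : S → Vect factors (up to natural isomorphism) through the quotient map S → (• → •)^T collapsing each left arrow to an identity, if and only if F sends each arrow of S whose components are all identities except one left arrow (c → l in a single coordinate) to an isomorphism. -/
import Mathlib


open CategoryTheory

/-- The poset `• ← • → •` with elements `l, c, r` and relations `c ≤ l`, `c ≤ r`. -/
inductive Three : Type
  | l | c | r
deriving DecidableEq

instance : Preorder Three where
  le a b := a = b ∨ a = Three.c
  le_refl a := Or.inl rfl
  le_trans a b c' hab hbc := by
    rcases hab with rfl | h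
    · exact hbc
    · exact Or.inr h

/-- The product poset `S = (• ← • → •)^T`, i.e. functions `T → {l, c, r}` ordered
pointwise. -/
structure Cube (T : Type) where
  f : T → Three

instance (T : Type) : Preorder (Cube T) := Preorder.lift Cube.f

/-- The product poset `(• → •)^T`, i.e. functions `T → {0 → 1}` ordered pointwise. -/
structure BCube (T : Type) where
  f : T → Bool

instance (T : Type) : Preorder (BCube T) := Preorder.lift BCube.f

/-- The quotient map `(• ← • → •)^T → (• → •)^T` collapsing each left arrow `c → l`
to an identity (sending `φ` to the indicator function of `{t : φ t = r}`). -/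
def quotMonotone (T : Type) :
    Monotone (fun (φ : Cube T) => BCube.mk (fun t => (decide (φ.f t = Three.r) : Bool))) := by
  intro φ ψ h t
  show (decide (φ.f t = Three.r) : Bool) ≤ decide (ψ.f t = Three.r)
  rcases h t with heq | hc
  · rw [heq]
  · rw [hc]
    simp

lemma cube_le_iff {T : Type} (φ ψ : Cube T) : φ ≤ ψ ↔ ∀ t, φ.f t ≤ ψ.f t := Iff.rfl

lemma collapse_iso {K : Type} [Field K] {T : Type} [Fintype T]
    (F : Cube T ⥤ ModuleCat.{0} K)
    (hF : ∀ (φ ψ : Cube T) (h : φ ≤ ψ),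
      (∃ t₀, φ.f t₀ = Three.c ∧ ψ.f t₀ = Three.l ∧ ∀ t, t ≠ t₀ → φ.f t = ψ.f t) →
      IsIso (F.map (homOfLE h))) :
    ∀ (n : ℕ) (φ ψ : Cube T) (h : φ ≤ ψ),
      (∀ t, φ.f t = ψ.f t ∨ (φ.f t = Three.c ∧ ψ.f t = Three.l)) →
      (Finset.univ.filter fun t => φ.f t ≠ ψ.f t).card ≤ n →
      IsIso (F.map (homOfLE h)) := by
  classical
  intro n
  induction n with
  | zero =>
    intro φ ψ h hcond hcard
    have hempty : (Finset.univ.filter fun t => φ.f t ≠ ψ.f t) = ∅ :=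
      Finset.card_eq_zero.mp (Nat.le_zero.mp hcard)
    have heq : ∀ t, φ.f t = ψ.f t := by
      intro t
      by_contra hne
      have : t ∈ (Finset.univ.filter fun t => φ.f t ≠ ψ.f t) := by
        simp [hne]
      rw [hempty] at this
      exact absurd this (Finset.notMem_empty t)
    obtain ⟨f⟩ := φ
    obtain ⟨g⟩ := ψ
    have : f = g := funext heq
    subst this
    have : homOfLE h = 𝟙 (Cube.mk f) := Subsingleton.elim _ _
    rw [this, F.map_id]
    infer_instance
  | succ n ih =>
    intro φ ψ h hcond hcard
    by_cases hzero : (Finset.univ.filter fun t => φ.f t ≠ ψ.f t).card = 0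
    · exact ih φ ψ h hcond (by omega)
    · have hne : (Finset.univ.filter fun t => φ.f t ≠ ψ.f t).Nonempty :=
        Finset.card_pos.mp (Nat.pos_of_ne_zero hzero)
      obtain ⟨t₀, ht₀⟩ := hne
      have hne₀ : φ.f t₀ ≠ ψ.f t₀ := (Finset.mem_filter.mp ht₀).2
      obtain ⟨hc, hl⟩ : φ.f t₀ = Three.c ∧ ψ.f t₀ = Three.l := by
        rcases hcond t₀ with h' | h'
        · exact absurd h' hne₀
        · exact h'
      set χ : Cube T := Cube.mk (fun t => if t = t₀ then Three.l else φ.f t) with hχ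
      have hχt : ∀ t, χ.f t = if t = t₀ then Three.l else φ.f t := fun t => rfl
      have h1 : φ ≤ χ := by
        intro t
        rw [hχt]
        by_cases ht : t = t₀
        · subst ht; rw [if_pos rfl, hc]; exact Or.inr rfl
        · rw [if_neg ht]
      have h2 : χ ≤ ψ := by
        intro t
        rw [hχt]
        by_cases ht : t = t₀
        · subst ht; rw [if_pos rfl, hl]
        · rw [if_neg ht]; exact h t
      have i1 : IsIso (F.map (homOfLE h1)) := by
        refine hF φ χ h1 ⟨t₀, hc, ?_, ?_⟩
        · rw [hχt, if_pos rfl]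
        · intro t ht; rw [hχt, if_neg ht]
      have i2 : IsIso (F.map (homOfLE h2)) := by
        refine ih χ ψ h2 ?_ ?_
        · intro t
          rw [hχt]
          by_cases ht : t = t₀
          · subst ht; rw [if_pos rfl, hl]; exact Or.inl rfl
          · rw [if_neg ht]; exact hcond t
        · have hsub : (Finset.univ.filter fun t => χ.f t ≠ ψ.f t) ⊆
              (Finset.univ.filter fun t => φ.f t ≠ ψ.f t).erase t₀ := by
            intro t ht
            have ht' : χ.f t ≠ ψ.f t := (Finset.mem_filter.mp ht).2
            have htn : t ≠ t₀ := by
              intro he; subst he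
              rw [hχt, if_pos rfl, hl] at ht'
              exact ht' rfl
            refine Finset.mem_erase.mpr ⟨htn, Finset.mem_filter.mpr ⟨Finset.mem_univ _, ?_⟩⟩
            rw [hχt, if_neg htn] at ht'
            exact ht'
          have := Finset.card_le_card hsub
          have := Finset.card_erase_of_mem ht₀
          omega
      have hcomp : homOfLE h = homOfLE h1 ≫ homOfLE h2 := Subsingleton.elim _ _
      rw [hcomp, F.map_comp]
      exact IsIso.comp_isIso

/-- A functor `F : (• ← • → •)^T → Vect` factors (up to natural isomorphism) through
the quotient `(• → •)^T` iff `F` inverts every arrow all of whose components are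
identities except a single left arrow `c → l`. -/
theorem stmt12 (K : Type) [Field K] (T : Type) [Fintype T]
    (F : Cube T ⥤ ModuleCat.{0} K) :
    (∃ G : BCube T ⥤ ModuleCat.{0} K,
        Nonempty (F ≅ (quotMonotone T).functor ⋙ G)) ↔
    (∀ (φ ψ : Cube T) (h : φ ≤ ψ),
      (∃ t₀, φ.f t₀ = Three.c ∧ ψ.f t₀ = Three.l ∧ ∀ t, t ≠ t₀ → φ.f t = ψ.f t) →
      IsIso (F.map (homOfLE h))) := by
  constructor
  · rintro ⟨G, ⟨e⟩⟩ φ ψ h ⟨t₀, hc, hl, hrest⟩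
    have heq : (quotMonotone T).functor.obj φ = (quotMonotone T).functor.obj ψ := by
      show BCube.mk _ = BCube.mk _
      congr 1
      funext t
      by_cases ht : t = t₀
      · subst ht; simp [hc, hl]
      · rw [hrest t ht]
    have key := e.hom.naturality (homOfLE h)
    have hmap : F.map (homOfLE h) =
        e.hom.app φ ≫ ((quotMonotone T).functor ⋙ G).map (homOfLE h) ≫ e.inv.app ψ := by
      rw [← Category.assoc, ← key, Category.assoc, Iso.hom_inv_id_app,
        Category.comp_id]
    rw [hmap]
    have hq : (quotMonotone T).functor.map (homOfLE h) = eqToHom heq :=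
      Subsingleton.elim _ _
    have : ((quotMonotone T).functor ⋙ G).map (homOfLE h) = G.map (eqToHom heq) := by
      show G.map ((quotMonotone T).functor.map (homOfLE h)) = _
      rw [hq]
    rw [this]
    infer_instance
  · intro hF
    have smono : Monotone (fun b : BCube T =>
        Cube.mk (fun t => if b.f t then Three.r else Three.c)) := by
      intro b b' hb t
      show (if b.f t then Three.r else Three.c) ≤ (if b'.f t then Three.r else Three.c)
      cases hbt : b.f t with
      | false => rw [if_neg (by simp)]; exact Or.inr rfl
      | true =>
        have : b'.f t = true := by
          have := hb t
          rw [hbt] at this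
          exact Bool.eq_true_of_true_le this
        simp [this]
    have hle : ∀ φ : Cube T,
        smono.functor.obj ((quotMonotone T).functor.obj φ) ≤ φ := by
      intro φ t
      show (if (decide (φ.f t = Three.r) : Bool) then Three.r else Three.c) ≤ φ.f t
      cases hft : φ.f t with
      | r => rw [if_pos (by simp)]
      | l => rw [if_neg (by simp)]; exact Or.inr rfl
      | c => rw [if_neg (by simp)]
    have hiso : ∀ φ : Cube T, IsIso (F.map (homOfLE (hle φ))) := by
      intro φ
      refine collapse_iso F hF (Fintype.card T) _ φ (hle φ) ?_ ?_
      · intro t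
        show (if (decide (φ.f t = Three.r) : Bool) then Three.r else Three.c) = φ.f t ∨ _
        cases hft : φ.f t with
        | r => left; rw [if_pos (by simp)]
        | c => left; rw [if_neg (by simp)]
        | l =>
          right
          refine ⟨?_, rfl⟩
          show (if (decide (φ.f t = Three.r) : Bool) then Three.r else Three.c) = Three.c
          rw [if_neg (by simp [hft])]
      · exact le_trans (Finset.card_filter_le _ _) (le_of_eq (Finset.card_univ))
    refine ⟨smono.functor ⋙ F, ⟨(NatIso.ofComponents
      (fun φ => @asIso _ _ _ _ _ (hiso φ)) ?_).symm⟩⟩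
    intro φ ψ f
    show F.map _ ≫ F.map _ = F.map _ ≫ F.map _
    rw [← F.map_comp, ← F.map_comp]
    exact congrArg F.map (Subsingleton.elim _ _)
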